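/- Let m ≥ 2 be an integer, κ ∈ ℝ, λ > 0, and R > 0 with √κ·R < π when κ > 0. Let u : [0,R] → ℝ be smooth (the restriction of a C^∞ function on an open interval containing [0,R]) with u'(0) = 0, satisfying the ODE u''(r) + (m−1)·(sn_κ'(r)/sn_κ(r))·u'(r) = −λ·u(r) for all r ∈ (0,R). Define g : (0,R) → ℝ by g(r) = m·(sn_κ'(r)/sn_κ(r))·u'(r) + λ·u(r). Then g''(r) → −2·λ·(λ − κ·m)·u(0)/(m·(m+2)) as r → 0⁺. -/

import Mathlib

open Set Filter

/-- The generalized sine function `sn_κ` of the simply connected space form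
of constant sectional curvature `κ`. -/
noncomputable def sn (κ : ℝ) : ℝ → ℝ := fun r =>
  if 0 < κ then Real.sin (Real.sqrt κ * r) / Real.sqrt κ
  else if κ = 0 then r
  else Real.sinh (Real.sqrt (-κ) * r) / Real.sqrt (-κ)

/-- The derivative of `sn κ`. -/
noncomputable def snd (κ : ℝ) : ℝ → ℝ := fun r =>
  if 0 < κ then Real.cos (Real.sqrt κ * r)
  else if κ = 0 then 1
  else Real.cosh (Real.sqrt (-κ) * r)

lemma sn_of_pos {κ : ℝ} (h : 0 < κ) :
    sn κ = fun r => Real.sin (Real.sqrt κ * r) / Real.sqrt κ := by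
  funext r; simp [sn, h]

lemma sn_of_zero : sn 0 = fun r => r := by funext r; simp [sn]

lemma sn_of_neg {κ : ℝ} (h : κ < 0) :
    sn κ = fun r => Real.sinh (Real.sqrt (-κ) * r) / Real.sqrt (-κ) := by
  funext r; simp [sn, not_lt.2 h.le, h.ne]

lemma snd_of_pos {κ : ℝ} (h : 0 < κ) :
    snd κ = fun r => Real.cos (Real.sqrt κ * r) := by
  funext r; simp [snd, h]

lemma snd_of_zero : snd 0 = fun _ => (1:ℝ) := by funext r; simp [snd]

lemma snd_of_neg {κ : ℝ} (h : κ < 0) :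
    snd κ = fun r => Real.cosh (Real.sqrt (-κ) * r) := by
  funext r; simp [snd, not_lt.2 h.le, h.ne]

lemma hasDerivAt_sn (κ r : ℝ) : HasDerivAt (sn κ) (snd κ r) r := by
  rcases lt_trichotomy κ 0 with h | h | h
  · have hc : 0 < Real.sqrt (-κ) := Real.sqrt_pos.2 (by linarith)
    have h1 : HasDerivAt (fun r : ℝ => Real.sqrt (-κ) * r) (Real.sqrt (-κ)) r := by
      simpa using (hasDerivAt_id r).const_mul (Real.sqrt (-κ))
    have h2 := ((Real.hasDerivAt_sinh (Real.sqrt (-κ) * r)).comp r h1).div_const (Real.sqrt (-κ))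
    rw [sn_of_neg h, snd_of_neg h]
    have e : Real.cosh (Real.sqrt (-κ) * r) * Real.sqrt (-κ) / Real.sqrt (-κ)
        = Real.cosh (Real.sqrt (-κ) * r) := by field_simp
    rw [e] at h2
    exact h2
  · subst h
    rw [sn_of_zero, snd_of_zero]
    exact hasDerivAt_id r
  · have hc : 0 < Real.sqrt κ := Real.sqrt_pos.2 h
    have h1 : HasDerivAt (fun r : ℝ => Real.sqrt κ * r) (Real.sqrt κ) r := by
      simpa using (hasDerivAt_id r).const_mul (Real.sqrt κ)
    have h2 := ((Real.hasDerivAt_sin (Real.sqrt κ * r)).comp r h1).div_const (Real.sqrt κ)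
    rw [sn_of_pos h, snd_of_pos h]
    have e : Real.cos (Real.sqrt κ * r) * Real.sqrt κ / Real.sqrt κ
        = Real.cos (Real.sqrt κ * r) := by field_simp
    rw [e] at h2
    exact h2

lemma deriv_sn (κ : ℝ) : deriv (sn κ) = snd κ :=
  funext fun r => (hasDerivAt_sn κ r).deriv

lemma hasDerivAt_snd (κ r : ℝ) : HasDerivAt (snd κ) (-κ * sn κ r) r := by
  rcases lt_trichotomy κ 0 with h | h | h
  · have hc : 0 < Real.sqrt (-κ) := Real.sqrt_pos.2 (by linarith)
    have hms : Real.sqrt (-κ) * Real.sqrt (-κ) = -κ := Real.mul_self_sqrt (by linarith)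
    have h1 : HasDerivAt (fun r : ℝ => Real.sqrt (-κ) * r) (Real.sqrt (-κ)) r := by
      simpa using (hasDerivAt_id r).const_mul (Real.sqrt (-κ))
    have h2 := (Real.hasDerivAt_cosh (Real.sqrt (-κ) * r)).comp r h1
    rw [sn_of_neg h, snd_of_neg h]
    have e : Real.sinh (Real.sqrt (-κ) * r) * Real.sqrt (-κ)
        = -κ * (Real.sinh (Real.sqrt (-κ) * r) / Real.sqrt (-κ)) := by
      field_simp
      linear_combination Real.sinh (Real.sqrt (-κ) * r) * hms
    rw [e] at h2
    exact h2
  · subst h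
    rw [sn_of_zero, snd_of_zero]
    simpa using hasDerivAt_const r (1:ℝ)
  · have hc : 0 < Real.sqrt κ := Real.sqrt_pos.2 h
    have hms : Real.sqrt κ * Real.sqrt κ = κ := Real.mul_self_sqrt h.le
    have h1 : HasDerivAt (fun r : ℝ => Real.sqrt κ * r) (Real.sqrt κ) r := by
      simpa using (hasDerivAt_id r).const_mul (Real.sqrt κ)
    have h2 := (Real.hasDerivAt_cos (Real.sqrt κ * r)).comp r h1
    rw [sn_of_pos h, snd_of_pos h]
    have e : -Real.sin (Real.sqrt κ * r) * Real.sqrt κ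
        = -κ * (Real.sin (Real.sqrt κ * r) / Real.sqrt κ) := by
      field_simp
      linear_combination (-Real.sin (Real.sqrt κ * r)) * hms
    rw [e] at h2
    exact h2

lemma sn_zero_eq (κ : ℝ) : sn κ 0 = 0 := by
  rcases lt_trichotomy κ 0 with h | h | h
  · rw [sn_of_neg h]; simp
  · subst h; rw [sn_of_zero]
  · rw [sn_of_pos h]; simp

lemma snd_zero_eq (κ : ℝ) : snd κ 0 = 1 := by
  rcases lt_trichotomy κ 0 with h | h | h
  · rw [snd_of_neg h]; simp
  · subst h; rw [snd_of_zero]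
  · rw [snd_of_pos h]; simp

lemma sn_pos (κ R : ℝ) (hR : 0 < R) (hκR : 0 < κ → Real.sqrt κ * R < Real.pi) :
    ∀ r ∈ Set.Ioo (0:ℝ) R, 0 < sn κ r := by
  intro r hr
  rcases lt_trichotomy κ 0 with h | h | h
  · have hc : 0 < Real.sqrt (-κ) := Real.sqrt_pos.2 (by linarith)
    have hs : 0 < Real.sinh (Real.sqrt (-κ) * r) :=
      Real.sinh_pos_iff.2 (mul_pos hc hr.1)
    rw [sn_of_neg h]
    positivity
  · subst h; rw [sn_of_zero]; exact hr.1
  · have hc : 0 < Real.sqrt κ := Real.sqrt_pos.2 h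
    have h1 : 0 < Real.sqrt κ * r := mul_pos hc hr.1
    have h2 : Real.sqrt κ * r < Real.pi := by nlinarith [hr.2, hκR h]
    have := Real.sin_pos_of_pos_of_lt_pi h1 h2
    rw [sn_of_pos h]
    positivity

/-- with `g = m (sn_κ'/sn_κ) u' + λ u`, the second derivative `g''`
tends to `-2λ(λ - κ m) u(0) / (m (m+2))` as `r → 0⁺`. -/
theorem stmt4 (m : ℕ) (hm : 2 ≤ m) (κ lam R a b : ℝ)
    (hlam : 0 < lam) (hR : 0 < R)
    (hκR : 0 < κ → Real.sqrt κ * R < Real.pi)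
    (ha : a < 0) (hb : R < b)
    (u : ℝ → ℝ) (hu : ContDiffOn ℝ (⊤ : ℕ∞) u (Set.Ioo a b))
    (hu'0 : deriv u 0 = 0)
    (hode : ∀ r ∈ Set.Ioo (0:ℝ) R,
      deriv (deriv u) r + ((m : ℝ) - 1) * (deriv (sn κ) r / sn κ r) * deriv u r
        = -lam * u r) :
    Filter.Tendsto
      (deriv (deriv (fun r => (m : ℝ) * (deriv (sn κ) r / sn κ r) * deriv u r + lam * u r)))
      (nhdsWithin 0 (Set.Ioi 0))
      (nhds (-2 * lam * (lam - κ * (m : ℝ)) * u 0 / ((m : ℝ) * ((m : ℝ) + 2)))) := by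
  have hm1 : (2:ℝ) ≤ (m:ℝ) := by exact_mod_cast hm
  have hmne : ((m:ℝ) - 1) ≠ 0 := by linarith
  have hmne0 : ((m:ℝ)) ≠ 0 := by linarith
  have hmne2 : ((m:ℝ) + 2) ≠ 0 := by linarith
  have h0ab : (0:ℝ) ∈ Set.Ioo a b := ⟨ha, lt_trans hR hb⟩
  have hopen : IsOpen (Set.Ioo a b) := isOpen_Ioo
  have hsub : Set.Ioo (0:ℝ) R ⊆ Set.Ioo a b :=
    fun r hr => ⟨lt_trans ha hr.1, lt_trans hr.2 hb⟩
  rw [deriv_sn] at hode ⊢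
  set d1 := deriv u with hd1e
  set d2 := deriv d1 with hd2e
  set d3 := deriv d2 with hd3e
  set d4 := deriv d3 with hd4e
  set d5 := deriv d4 with hd5e
  have hu1 : ContDiffOn ℝ (⊤ : ℕ∞) d1 (Set.Ioo a b) := hu.deriv_of_isOpen hopen (by simp)
  have hu2 : ContDiffOn ℝ (⊤ : ℕ∞) d2 (Set.Ioo a b) := hu1.deriv_of_isOpen hopen (by simp)
  have hu3 : ContDiffOn ℝ (⊤ : ℕ∞) d3 (Set.Ioo a b) := hu2.deriv_of_isOpen hopen (by simp)
  have hu4 : ContDiffOn ℝ (⊤ : ℕ∞) d4 (Set.Ioo a b) := hu3.deriv_of_isOpen hopen (by simp)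
  have hder : ∀ (f : ℝ → ℝ), ContDiffOn ℝ (⊤ : ℕ∞) f (Set.Ioo a b) →
      ∀ r ∈ Set.Ioo a b, HasDerivAt f (deriv f r) r := fun f hf r hr =>
    ((hf.differentiableOn (by simp)).differentiableAt (hopen.mem_nhds hr)).hasDerivAt
  have hcont : ∀ (f : ℝ → ℝ), ContDiffOn ℝ (⊤ : ℕ∞) f (Set.Ioo a b) → ContinuousAt f 0 :=
    fun f hf => hf.continuousOn.continuousAt (hopen.mem_nhds h0ab)
  have Hu : ∀ r ∈ Set.Ioo a b, HasDerivAt u (d1 r) r := hder u hu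
  have Hd1 : ∀ r ∈ Set.Ioo a b, HasDerivAt d1 (d2 r) r := hder d1 hu1
  have Hd2 : ∀ r ∈ Set.Ioo a b, HasDerivAt d2 (d3 r) r := hder d2 hu2
  have Hd3 : ∀ r ∈ Set.Ioo a b, HasDerivAt d3 (d4 r) r := hder d3 hu3
  have Hd4 : ∀ r ∈ Set.Ioo a b, HasDerivAt d4 (d5 r) r := hder d4 hu4
  have hcu : ContinuousAt u 0 := hcont u hu
  have hc1 : ContinuousAt d1 0 := hcont d1 hu1
  have hc2 : ContinuousAt d2 0 := hcont d2 hu2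
  have hc3 : ContinuousAt d3 0 := hcont d3 hu3
  have hc4 : ContinuousAt d4 0 := hcont d4 hu4
  have hc5 : ContinuousAt d5 0 := hcont d5 (hu4.deriv_of_isOpen hopen (by simp))
  have hcs : ContinuousAt (sn κ) 0 := (hasDerivAt_sn κ 0).continuousAt
  have hcp : ContinuousAt (snd κ) 0 := (hasDerivAt_snd κ 0).continuousAt
  have hcsA : Continuous (sn κ) := by
    rw [continuous_iff_continuousAt]; exact fun x => (hasDerivAt_sn κ x).continuousAt
  have hcpA : Continuous (snd κ) := by
    rw [continuous_iff_continuousAt]; exact fun x => (hasDerivAt_snd κ x).continuousAt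
  -- the G hierarchy
  set G : ℝ → ℝ := fun r => (d2 r + lam * u r) * sn κ r + ((m:ℝ)-1) * (snd κ r * d1 r)
    with hGe
  set G1 : ℝ → ℝ := fun r =>
      ((d3 r + lam * d1 r) * sn κ r + (d2 r + lam * u r) * snd κ r)
      + ((m:ℝ)-1) * ((-κ * sn κ r) * d1 r + snd κ r * d2 r) with hG1e
  set G2 : ℝ → ℝ := fun r =>
      (((d4 r + lam * d2 r) * sn κ r + (d3 r + lam * d1 r) * snd κ r)
        + ((d3 r + lam * d1 r) * snd κ r + (d2 r + lam * u r) * (-κ * sn κ r)))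
      + ((m:ℝ)-1) * (((-κ * snd κ r) * d1 r + (-κ * sn κ r) * d2 r)
        + ((-κ * sn κ r) * d2 r + snd κ r * d3 r)) with hG2e
  set G3 : ℝ → ℝ := fun r =>
      ((((d5 r + lam * d3 r) * sn κ r + (d4 r + lam * d2 r) * snd κ r)
        + ((d4 r + lam * d2 r) * snd κ r + (d3 r + lam * d1 r) * (-κ * sn κ r)))
       + (((d4 r + lam * d2 r) * snd κ r + (d3 r + lam * d1 r) * (-κ * sn κ r))
        + ((d3 r + lam * d1 r) * (-κ * sn κ r) + (d2 r + lam * u r) * (-κ * snd κ r))))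
      + ((m:ℝ)-1) * ((((-κ * (-κ * sn κ r)) * d1 r + (-κ * snd κ r) * d2 r)
          + ((-κ * snd κ r) * d2 r + (-κ * sn κ r) * d3 r))
        + (((-κ * snd κ r) * d2 r + (-κ * sn κ r) * d3 r)
          + ((-κ * sn κ r) * d3 r + snd κ r * d4 r))) with hG3e
  have HG : ∀ r ∈ Set.Ioo a b, HasDerivAt G (G1 r) r := by
    intro r hr
    exact (((Hd2 r hr).add ((Hu r hr).const_mul lam)).mul (hasDerivAt_sn κ r)).add
      (((hasDerivAt_snd κ r).mul (Hd1 r hr)).const_mul ((m:ℝ)-1))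
  have HG1 : ∀ r ∈ Set.Ioo a b, HasDerivAt G1 (G2 r) r := by
    intro r hr
    exact ((((Hd3 r hr).add ((Hd1 r hr).const_mul lam)).mul (hasDerivAt_sn κ r)).add
        (((Hd2 r hr).add ((Hu r hr).const_mul lam)).mul (hasDerivAt_snd κ r))).add
      (((((hasDerivAt_sn κ r).const_mul (-κ)).mul (Hd1 r hr)).add
        ((hasDerivAt_snd κ r).mul (Hd2 r hr))).const_mul ((m:ℝ)-1))
  have HG2 : ∀ r ∈ Set.Ioo a b, HasDerivAt G2 (G3 r) r := by
    intro r hr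
    exact (((((Hd4 r hr).add ((Hd2 r hr).const_mul lam)).mul (hasDerivAt_sn κ r)).add
        (((Hd3 r hr).add ((Hd1 r hr).const_mul lam)).mul (hasDerivAt_snd κ r))).add
      ((((Hd3 r hr).add ((Hd1 r hr).const_mul lam)).mul (hasDerivAt_snd κ r)).add
        (((Hd2 r hr).add ((Hu r hr).const_mul lam)).mul
          ((hasDerivAt_sn κ r).const_mul (-κ))))).add
      ((((((hasDerivAt_snd κ r).const_mul (-κ)).mul (Hd1 r hr)).add
          (((hasDerivAt_sn κ r).const_mul (-κ)).mul (Hd2 r hr))).add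
        ((((hasDerivAt_sn κ r).const_mul (-κ)).mul (Hd2 r hr)).add
          ((hasDerivAt_snd κ r).mul (Hd3 r hr)))).const_mul ((m:ℝ)-1))
  -- G vanishes on (0, R)
  have hGzero : ∀ r ∈ Set.Ioo (0:ℝ) R, G r = 0 := by
    intro r hr
    have hne := (sn_pos κ R hR hκR r hr).ne'
    have h := hode r hr
    field_simp at h
    simp only [hGe]
    linear_combination h
  have hderiv_zero : ∀ (F F' : ℝ → ℝ), (∀ r ∈ Set.Ioo a b, HasDerivAt F (F' r) r) →
      (∀ r ∈ Set.Ioo (0:ℝ) R, F r = 0) → ∀ r ∈ Set.Ioo (0:ℝ) R, F' r = 0 := by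
    intro F F' hF hF0 r hr
    have h1 : F =ᶠ[nhds r] fun _ => (0:ℝ) :=
      eventuallyEq_of_mem (isOpen_Ioo.mem_nhds hr) hF0
    have h2 := (hF r (hsub hr)).deriv
    rw [h1.deriv_eq] at h2
    simpa using h2.symm
  have hG1zero := hderiv_zero G G1 HG hGzero
  have hG2zero := hderiv_zero G1 G2 HG1 hG1zero
  have hG3zero := hderiv_zero G2 G3 HG2 hG2zero
  have hIoo_mem : Set.Ioo (0:ℝ) R ∈ nhdsWithin (0:ℝ) (Set.Ioi 0) :=
    Ioo_mem_nhdsGT_of_mem ⟨le_refl (0:ℝ), hR⟩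
  have hlim_zero : ∀ (F : ℝ → ℝ), ContinuousAt F 0 →
      (∀ r ∈ Set.Ioo (0:ℝ) R, F r = 0) → F 0 = 0 := by
    intro F hc h0
    have h1 : Tendsto F (nhdsWithin (0:ℝ) (Set.Ioi 0)) (nhds (F 0)) :=
      hc.continuousWithinAt
    have h2 : Tendsto F (nhdsWithin (0:ℝ) (Set.Ioi 0)) (nhds 0) := by
      apply Tendsto.congr' _ tendsto_const_nhds
      filter_upwards [hIoo_mem] with r hr
      exact (h0 r hr).symm
    exact tendsto_nhds_unique h1 h2
  have hcG1 : ContinuousAt G1 0 := by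
    simp only [hG1e]
    fun_prop
  have hcG2 : ContinuousAt G2 0 := by
    simp only [hG2e]
    fun_prop
  have hcG3 : ContinuousAt G3 0 := by
    simp only [hG3e]
    fun_prop
  have hG1at0 := hlim_zero G1 hcG1 hG1zero
  have hG2at0 := hlim_zero G2 hcG2 hG2zero
  have hG3at0 := hlim_zero G3 hcG3 hG3zero
  -- extract numeric relations
  have E1 : (m:ℝ) * d2 0 + lam * u 0 = 0 := by
    rw [hG1e] at hG1at0
    simp only [sn_zero_eq, snd_zero_eq, hu'0] at hG1at0
    linarith [hG1at0]
  have E3 : ((m:ℝ) + 2) * d4 0 = (2*((m:ℝ)-1)*κ - 3*lam) * d2 0 := by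
    rw [hG3e] at hG3at0
    simp only [sn_zero_eq, snd_zero_eq, hu'0] at hG3at0
    linear_combination hG3at0 + κ * E1
  -- the function h and its derivatives
  set h : ℝ → ℝ := fun r => -((m:ℝ) * d2 r + lam * u r) / ((m:ℝ)-1) with hhe
  set h1 : ℝ → ℝ := fun r => -((m:ℝ) * d3 r + lam * d1 r) / ((m:ℝ)-1) with hh1e
  set h2 : ℝ → ℝ := fun r => -((m:ℝ) * d4 r + lam * d2 r) / ((m:ℝ)-1) with hh2e
  have Hh : ∀ r ∈ Set.Ioo a b, HasDerivAt h (h1 r) r := by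
    intro r hr
    exact ((((Hd2 r hr).const_mul ((m:ℝ))).add ((Hu r hr).const_mul lam)).neg).div_const _
  have Hh1 : ∀ r ∈ Set.Ioo a b, HasDerivAt h1 (h2 r) r := by
    intro r hr
    exact ((((Hd3 r hr).const_mul ((m:ℝ))).add ((Hd1 r hr).const_mul lam)).neg).div_const _
  have hg_eq : ∀ r ∈ Set.Ioo (0:ℝ) R,
      (fun r => (m : ℝ) * (snd κ r / sn κ r) * d1 r + lam * u r) r = h r := by
    intro r hr
    have hne := (sn_pos κ R hR hκR r hr).ne'
    have hode' := hode r hr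
    simp only [hhe]
    field_simp at hode' ⊢
    linear_combination ((m:ℝ)) * hode'
  have hg'_eq : ∀ r ∈ Set.Ioo (0:ℝ) R,
      deriv (fun r => (m : ℝ) * (snd κ r / sn κ r) * d1 r + lam * u r) r = h1 r := by
    intro r hr
    have he : (fun r => (m : ℝ) * (snd κ r / sn κ r) * d1 r + lam * u r) =ᶠ[nhds r] h :=
      eventuallyEq_of_mem (isOpen_Ioo.mem_nhds hr) hg_eq
    rw [he.deriv_eq, (Hh r (hsub hr)).deriv]
  have hg''_eq : ∀ r ∈ Set.Ioo (0:ℝ) R,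
      deriv (deriv (fun r => (m : ℝ) * (snd κ r / sn κ r) * d1 r + lam * u r)) r = h2 r := by
    intro r hr
    have he : deriv (fun r => (m : ℝ) * (snd κ r / sn κ r) * d1 r + lam * u r) =ᶠ[nhds r] h1 :=
      eventuallyEq_of_mem (isOpen_Ioo.mem_nhds hr) hg'_eq
    rw [he.deriv_eq, (Hh1 r (hsub hr)).deriv]
  have hch2 : ContinuousAt h2 0 := by
    simp only [hh2e]
    fun_prop
  have hval : h2 0 = -2 * lam * (lam - κ * (m : ℝ)) * u 0 / ((m : ℝ) * ((m : ℝ) + 2)) := by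
    have e2 : d2 0 = -(lam * u 0) / (m:ℝ) := by
      field_simp
      linarith [E1]
    have e4 : d4 0 = (2*((m:ℝ)-1)*κ - 3*lam) * (-(lam * u 0) / (m:ℝ)) / ((m:ℝ)+2) := by
      rw [← e2]
      field_simp
      linear_combination E3
    simp only [hh2e]
    rw [e2, e4]
    field_simp
    ring
  have htend : Tendsto h2 (nhdsWithin (0:ℝ) (Set.Ioi 0))
      (nhds (-2 * lam * (lam - κ * (m : ℝ)) * u 0 / ((m : ℝ) * ((m : ℝ) + 2)))) := by
    rw [← hval]
    exact hch2.continuousWithinAt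
  apply Tendsto.congr' _ htend
  filter_upwards [hIoo_mem] with r hr
  exact (hg''_eq r hr).symm
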